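/- Let w be a word over the countably infinite alphabet 𝔄 with mul(w) = {a, b} for distinct letters a and b, such that exactly one block 𝐚 of w contains both a and b, and 𝐚 begins with a and contains b (that is, 𝐚 ∈ a⁺b{a,b}*). Let w′ be the word obtained from w by replacing the block 𝐚 with the block b𝐚. Then the ∼_Q-class of w equals the union [w]_β ∪ [w′]_β of the β-classes of w and w′. -/

import Mathlib

/-- Words over the countably infinite alphabet `ℕ`. -/
abbrev Word : Type := List ℕ

/-- A monoid `M` satisfies the identity `u ≈ v` if every substitution of letters by
elements of `M` (equivalently, every monoid homomorphism from the free monoid) equalizes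
`u` and `v`. -/
def Satisfies (M : Type*) [Monoid M] (u v : Word) : Prop :=
  ∀ φ : ℕ → M, (u.map φ).prod = (v.map φ).prod

/-- A set of words `W` is stable with respect to a monoid `M`. -/
def Stable (W : Set Word) (M : Type*) [Monoid M] : Prop :=
  ∀ u v : Word, u ∈ W → Satisfies M u v → v ∈ W

/-- `u` is a `τ`-term for the monoid `M`. -/
def IsTerm (τ : Word → Word → Prop) (M : Type*) [Monoid M] (u : Word) : Prop :=
  ∀ v : Word, Satisfies M u v → τ u v

/-- The set of simple letters of a word. -/
def simpSet (u : Word) : Set ℕ := {x | u.count x = 1}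

/-- The set of multiple letters of a word. -/
def mulSet (u : Word) : Set ℕ := {x | 2 ≤ u.count x}

/-- The set of letters of a word. -/
def conSet (u : Word) : Set ℕ := {x | x ∈ u}

/-- The monoid congruence on the free monoid generated by the pairs `(a, a²)`. -/
inductive tau1 : Word → Word → Prop
  | base (a : ℕ) : tau1 [a] [a, a]
  | refl (u : Word) : tau1 u u
  | symm {u v : Word} : tau1 u v → tau1 v u
  | trans {u v x : Word} : tau1 u v → tau1 v x → tau1 u x
  | append {u v u' v' : Word} : tau1 u v → tau1 u' v' → tau1 (u ++ u') (v ++ v')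

/-- The relation γ. -/
def gamma (u v : Word) : Prop := simpSet u = simpSet v ∧ mulSet u = mulSet v

/-- The relation `τ₁ ∧ γ`. -/
def tau1gamma (u v : Word) : Prop := tau1 u v ∧ gamma u v

/-- A word is block-simple if every factor all of whose letters are multiple
(in particular, every block) involves at most one letter. -/
def BlockSimple (u : Word) : Prop :=
  ∀ p f s : Word, u = p ++ f ++ s → (∀ x ∈ f, x ∈ mulSet u) →
    ∀ x ∈ f, ∀ y ∈ f, x = y

/-- `assemble m t A = A 0 ++ t 0 :: A 1 ++ t 1 :: ... ++ t (m-1) :: A m`: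
the word with blocks `A i` separated by the letters `t i`. -/
def assemble (m : ℕ) (t : Fin m → ℕ) (A : Fin (m + 1) → Word) : Word :=
  A 0 ++ (List.ofFn fun i : Fin m => t i :: A i.succ).flatten

/-- Common core of the relations `β` and `∼_Q`: `u` and `v` decompose into blocks
separated by the same simple letters in the same order, corresponding blocks have the
same content; when `withOrder = true`, in corresponding blocks the order of first
occurrences of letters coincides. -/
def betaAux (withOrder : Bool) (u v : Word) : Prop :=
  ∃ (m : ℕ) (t : Fin m → ℕ) (A B : Fin (m + 1) → Word),
    u = assemble m t A ∧ v = assemble m t B ∧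
    (∀ i : Fin m, u.count (t i) = 1) ∧ (∀ i : Fin m, v.count (t i) = 1) ∧
    (∀ i : Fin (m + 1), ∀ x ∈ A i, x ∈ mulSet u) ∧
    (∀ i : Fin (m + 1), ∀ x ∈ B i, x ∈ mulSet v) ∧
    (∀ i : Fin (m + 1), ∀ x : ℕ, x ∈ A i ↔ x ∈ B i) ∧
    (withOrder = true → ∀ i : Fin (m + 1), ∀ x y : ℕ, x ∈ A i → y ∈ A i → x ≠ y →
      ((A i).idxOf x < (A i).idxOf y ↔ (B i).idxOf x < (B i).idxOf y))

/-- The relation β. -/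
def beta : Word → Word → Prop := betaAux true

/-- The relation `∼_Q` (β without the condition on the order of first occurrences). -/
def simQ : Word → Word → Prop := betaAux false

/-- The words `u_n` (letters: `a = 0`, `b = 1`, `t_k = k + 1`). -/
def uW : ℕ → Word
  | 0 => [0, 0, 1, 1]
  | k + 1 => (if k % 2 = 0 then 0 else 1) :: (k + 2) :: uW k

/-- The words `v_n` (letters: `a = 0`, `b = 1`, `t_k = k + 1`). -/
def vW : ℕ → Word
  | 0 => [1, 1, 0, 0]
  | k + 1 => (if k % 2 = 0 then 0 else 1) :: (k + 2) :: vW k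

/-- A monoid satisfies the identity system
`Σ_n = {xtx ≈ xtx², xtx ≈ x²tx, xy²x ≈ x²y², u_n ≈ v_n}`. -/
def SatSigma (n : ℕ) (N : Type*) [Monoid N] : Prop :=
  Satisfies N [0, 1, 0] [0, 1, 0, 0] ∧ Satisfies N [0, 1, 0] [0, 0, 1, 0] ∧
  Satisfies N [0, 1, 1, 0] [0, 0, 1, 1] ∧ Satisfies N (uW n) (vW n)

/-- A monoid is finitely based. -/
def FinBased (M : Type*) [Monoid M] : Prop :=
  ∃ S : Finset (Word × Word),
    (∀ p ∈ S, Satisfies M p.1 p.2) ∧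
    ∀ (N : Type) [Monoid N], (∀ p ∈ S, Satisfies N p.1 p.2) →
      ∀ u v : Word, Satisfies M u v → Satisfies N u v

/-- `U_n = x y₁² y₂² ⋯ y_n² x` (letters: `x = 0`, `y_i = i`). -/
def Uw (n : ℕ) : Word := 0 :: (((List.range n).map fun i => [i + 1, i + 1]).flatten ++ [0])

/-- `V_n = x y₁² x y₂² x ⋯ x y_n² x` (letters: `x = 0`, `y_i = i`). -/
def Vw (n : ℕ) : Word := 0 :: ((List.range n).map fun i => [i + 1, i + 1, 0]).flatten

/-- The language `a⁺bb⁺ta⁺ = {aⁱ bʲ t aᵏ : i, k ≥ 1, j ≥ 2}` (`a = 0`, `b = 1`, `t = 2`). -/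
def Lab : Set Word := {w | ∃ i j k : ℕ, 1 ≤ i ∧ 2 ≤ j ∧ 1 ≤ k ∧
  w = List.replicate i 0 ++ List.replicate j 1 ++ 2 :: List.replicate k 0}

/-- The β-class of `atb²a` as an explicit language:
`{aⁱ t bʲ a w : i ≥ 1, j ≥ 2} ∪ {aⁱ t bʲ aᵏ b w : i, j, k ≥ 1}`, `w ∈ {a,b}*`
(`a = 0`, `b = 1`, `t = 2`). -/
def LatBBa : Set Word :=
  {w | (∃ i j : ℕ, 1 ≤ i ∧ 2 ≤ j ∧ ∃ r : Word, (∀ x ∈ r, x = 0 ∨ x = 1) ∧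
      w = List.replicate i 0 ++ 2 :: (List.replicate j 1 ++ 0 :: r)) ∨
    (∃ i j k : ℕ, 1 ≤ i ∧ 1 ≤ j ∧ 1 ≤ k ∧ ∃ r : Word, (∀ x ∈ r, x = 0 ∨ x = 1) ∧
      w = List.replicate i 0 ++ 2 :: (List.replicate j 1 ++ (List.replicate k 0 ++ 1 :: r)))}

/-- `u` is a factor (subword) of `x`. -/
def IsFactorOf (u x : Word) : Prop := ∃ p s : Word, x = p ++ u ++ s

/-- The syntactic congruence of a language `W`. -/
def SyntCon (W : Set Word) : Con (FreeMonoid ℕ) where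
  r u v := ∀ p s : Word,
    p ++ FreeMonoid.toList u ++ s ∈ W ↔ p ++ FreeMonoid.toList v ++ s ∈ W
  iseqv := ⟨fun _ _ _ => Iff.rfl, fun h p s => (h p s).symm,
    fun h h' p s => (h p s).trans (h' p s)⟩
  mul' := by
    intro w x y z h h' p s
    have h1 := h p (FreeMonoid.toList y ++ s)
    have h2 := h' (p ++ FreeMonoid.toList x) s
    simp only [FreeMonoid.toList_mul, List.append_assoc] at h1 h2 ⊢
    exact h1.trans h2

/-- The syntactic monoid of a language `W`. -/
abbrev SyntMonoid (W : Set Word) : Type := (SyntCon W).Quotient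

/-! ### Concrete finite monoids -/

/-- The 7-element monoid `A¹`: identity `e1` adjoined to the semigroup `A = ⟨a,b,c ∣ a²=a, b²=b, ab=ca=0, ac=cb=c⟩ = {a,b,c,ba,bc,0}` (`z0` is the zero). -/
inductive A1M : Type
  | e1 | a | b | c | ba | bc | z0
deriving DecidableEq

/-- Multiplication of `A1M`. -/
def A1M.mul : A1M → A1M → A1M
  | .e1, .e1 => .e1
  | .e1, .a => .a
  | .e1, .b => .b
  | .e1, .c => .c
  | .e1, .ba => .ba
  | .e1, .bc => .bc
  | .e1, .z0 => .z0
  | .a, .e1 => .a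
  | .a, .a => .a
  | .a, .b => .z0
  | .a, .c => .c
  | .a, .ba => .z0
  | .a, .bc => .z0
  | .a, .z0 => .z0
  | .b, .e1 => .b
  | .b, .a => .ba
  | .b, .b => .b
  | .b, .c => .bc
  | .b, .ba => .ba
  | .b, .bc => .bc
  | .b, .z0 => .z0
  | .c, .e1 => .c
  | .c, .a => .z0
  | .c, .b => .c
  | .c, .c => .z0
  | .c, .ba => .z0
  | .c, .bc => .z0
  | .c, .z0 => .z0
  | .ba, .e1 => .ba
  | .ba, .a => .ba
  | .ba, .b => .z0
  | .ba, .c => .bc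
  | .ba, .ba => .z0
  | .ba, .bc => .z0
  | .ba, .z0 => .z0
  | .bc, .e1 => .bc
  | .bc, .a => .z0
  | .bc, .b => .bc
  | .bc, .c => .z0
  | .bc, .ba => .z0
  | .bc, .bc => .z0
  | .bc, .z0 => .z0
  | .z0, .e1 => .z0
  | .z0, .a => .z0
  | .z0, .b => .z0
  | .z0, .c => .z0
  | .z0, .ba => .z0
  | .z0, .bc => .z0
  | .z0, .z0 => .z0

instance : Monoid A1M where
  one := .e1
  mul := A1M.mul
  mul_assoc := by intro x y z; cases x <;> cases y <;> cases z <;> rfl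
  one_mul := by intro x; cases x <;> rfl
  mul_one := by intro x; cases x <;> rfl
/-- The 6-element monoid `E¹`: identity `e1` adjoined to the semigroup `E = ⟨a,b,c ∣ a²=ab=0, ba=ca=a, b²=bc=b, c²=cb=c⟩ = {a,b,c,ac,0}` (`z0` is the zero). -/
inductive E1M : Type
  | e1 | a | b | c | ac | z0
deriving DecidableEq

/-- Multiplication of `E1M`. -/
def E1M.mul : E1M → E1M → E1M
  | .e1, .e1 => .e1
  | .e1, .a => .a
  | .e1, .b => .b
  | .e1, .c => .c
  | .e1, .ac => .ac
  | .e1, .z0 => .z0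
  | .a, .e1 => .a
  | .a, .a => .z0
  | .a, .b => .z0
  | .a, .c => .ac
  | .a, .ac => .z0
  | .a, .z0 => .z0
  | .b, .e1 => .b
  | .b, .a => .a
  | .b, .b => .b
  | .b, .c => .b
  | .b, .ac => .ac
  | .b, .z0 => .z0
  | .c, .e1 => .c
  | .c, .a => .a
  | .c, .b => .c
  | .c, .c => .c
  | .c, .ac => .ac
  | .c, .z0 => .z0
  | .ac, .e1 => .ac
  | .ac, .a => .z0
  | .ac, .b => .ac
  | .ac, .c => .ac
  | .ac, .ac => .z0
  | .ac, .z0 => .z0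
  | .z0, .e1 => .z0
  | .z0, .a => .z0
  | .z0, .b => .z0
  | .z0, .c => .z0
  | .z0, .ac => .z0
  | .z0, .z0 => .z0

instance : Monoid E1M where
  one := .e1
  mul := E1M.mul
  mul_assoc := by intro x y z; cases x <;> cases y <;> cases z <;> rfl
  one_mul := by intro x; cases x <;> rfl
  mul_one := by intro x; cases x <;> rfl
/-- The 5-element monoid `A₀¹`: identity `e1` adjoined to the semigroup `A₀ = ⟨a,b ∣ a²=a, b²=b, ab=0⟩ = {a,b,ba,0}` (`z0` is the zero). -/
inductive A01M : Type
  | e1 | a | b | ba | z0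
deriving DecidableEq

/-- Multiplication of `A01M`. -/
def A01M.mul : A01M → A01M → A01M
  | .e1, .e1 => .e1
  | .e1, .a => .a
  | .e1, .b => .b
  | .e1, .ba => .ba
  | .e1, .z0 => .z0
  | .a, .e1 => .a
  | .a, .a => .a
  | .a, .b => .z0
  | .a, .ba => .z0
  | .a, .z0 => .z0
  | .b, .e1 => .b
  | .b, .a => .ba
  | .b, .b => .b
  | .b, .ba => .ba
  | .b, .z0 => .z0
  | .ba, .e1 => .ba
  | .ba, .a => .ba
  | .ba, .b => .z0
  | .ba, .ba => .z0
  | .ba, .z0 => .z0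
  | .z0, .e1 => .z0
  | .z0, .a => .z0
  | .z0, .b => .z0
  | .z0, .ba => .z0
  | .z0, .z0 => .z0

instance : Monoid A01M where
  one := .e1
  mul := A01M.mul
  mul_assoc := by intro x y z; cases x <;> cases y <;> cases z <;> rfl
  one_mul := by intro x; cases x <;> rfl
  mul_one := by intro x; cases x <;> rfl


/-- The 3-element monoid `L₂¹`: the two-element left-zero semigroup with identity adjoined. -/
inductive LZ1 : Type
  | e | a | b
deriving DecidableEq

instance : Fintype LZ1 := ⟨{.e, .a, .b}, by intro x; cases x <;> decide⟩

instance : Monoid LZ1 where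
  one := .e
  mul x y := match x with
    | .e => y
    | .a => .a
    | .b => .b
  mul_assoc := by decide
  one_mul := by decide
  mul_one := by decide

/-- The 3-element monoid `M(x) = {1, x, 0}` with `x·x = 0`. -/
inductive MX : Type
  | e | x | z
deriving DecidableEq

instance : Fintype MX := ⟨{.e, .x, .z}, by intro x; cases x <;> decide⟩

instance : Monoid MX where
  one := .e
  mul a b := match a, b with
    | .e, b => b
    | a, .e => a
    | _, _ => .z
  mul_assoc := by decide
  one_mul := by decide
  mul_one := by decide

/-!
A block decomposition of a word is unique: its blocks are what `splitOnP` cuts out between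
the simple letters. Hence in `w ∼_Q v` and `w β v` the decomposition of `w` can be taken to be
the given one, and likewise for `w'`, whose blocks have the same contents as those of `w`. As
`mul(w) = {a, b}` and only the block `𝐚` contains both letters, the order condition of `β`
concerns only whether `a` or `b` occurs first in the block of `v` corresponding to `𝐚`: since
`𝐚` begins with `a` and `b𝐚` with `b`, this decides between `w β v` and `w' β v`.
-/

theorem assemble_succ (m : ℕ) (t : Fin (m + 1) → ℕ) (A : Fin (m + 2) → Word) :
    assemble (m + 1) t A = A 0 ++ t 0 :: assemble m (fun i => t i.succ) (fun i => A i.succ) := by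
  simp [assemble, List.ofFn_succ]

section splitting

variable {m : ℕ} {t : Fin m → ℕ} {A : Fin (m + 1) → Word} {p : ℕ → Bool}

theorem splitOnP_assemble (ht : ∀ i, p (t i)) (hA : ∀ i, ∀ x ∈ A i, p x = false) :
    (assemble m t A).splitOnP p = List.ofFn A := by
  induction m with
  | zero => simpa [assemble] using List.splitOnP_eq_singleton (hA 0)
  | succ m ih =>
    rw [assemble_succ, List.splitOnP_append_cons_of_forall_mem (hA 0) _ (ht 0),
      ih (fun i => ht i.succ) (fun i => hA i.succ), List.ofFn_succ (f := A)]

theorem filter_assemble (ht : ∀ i, p (t i)) (hA : ∀ i, ∀ x ∈ A i, p x = false) :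
    (assemble m t A).filter p = List.ofFn t := by
  induction m with
  | zero => simpa [assemble] using hA 0
  | succ m ih =>
    rw [assemble_succ, List.filter_append, List.filter_eq_nil_iff.mpr (by simpa using hA 0),
      List.filter_cons_of_pos (ht 0), ih (fun i => ht i.succ) (fun i => hA i.succ),
      List.ofFn_succ, List.nil_append]

end splitting

def IsBlockDecomp (u : Word) (m : ℕ) (t : Fin m → ℕ) (A : Fin (m + 1) → Word) : Prop :=
  u = assemble m t A ∧ (∀ i, u.count (t i) = 1) ∧ ∀ i, ∀ x ∈ A i, x ∈ mulSet u

theorem IsBlockDecomp.ofFn_eq {u : Word} {m m' : ℕ} {t : Fin m → ℕ} {t' : Fin m' → ℕ}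
    {A : Fin (m + 1) → Word} {A' : Fin (m' + 1) → Word}
    (h : IsBlockDecomp u m t A) (h' : IsBlockDecomp u m' t' A') :
    List.ofFn t = List.ofFn t' ∧ List.ofFn A = List.ofFn A' := by
  obtain ⟨hu, ht, hA⟩ := h
  obtain ⟨hu', ht', hA'⟩ := h'
  have hmul : ∀ x ∈ mulSet u, decide (u.count x = 1) = false := fun x (hx : 2 ≤ _) => by
    simp only [decide_eq_false_iff_not]
    omega
  constructor
  · rw [← filter_assemble (p := fun x => decide (u.count x = 1)) (by simpa using ht)
      (fun i x hx => hmul x (hA i x hx)), ← hu,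
      ← filter_assemble (by simpa using ht') (fun i x hx => hmul x (hA' i x hx)), ← hu']
  · rw [← splitOnP_assemble (p := fun x => decide (u.count x = 1)) (by simpa using ht)
      (fun i x hx => hmul x (hA i x hx)), ← hu,
      ← splitOnP_assemble (by simpa using ht') (fun i x hx => hmul x (hA' i x hx)), ← hu']

def SameFirstOccOrder (l l' : Word) : Prop :=
  ∀ x y : ℕ, x ∈ l → y ∈ l → x ≠ y → (l.idxOf x < l.idxOf y ↔ l'.idxOf x < l'.idxOf y)

theorem betaAux_iff_of_isBlockDecomp {o : Bool} {u v : Word} {m : ℕ} {t : Fin m → ℕ}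
    {A : Fin (m + 1) → Word} (hu : IsBlockDecomp u m t A) :
    betaAux o u v ↔ ∃ B, IsBlockDecomp v m t B ∧ (∀ i x, x ∈ A i ↔ x ∈ B i) ∧
      (o = true → ∀ i, SameFirstOccOrder (A i) (B i)) := by
  constructor
  · rintro ⟨m', t', A', B, hu', hv, ht', htv, hA', hB, hcon, hord⟩
    obtain ⟨htt, hAA⟩ := IsBlockDecomp.ofFn_eq ⟨hu', ht', hA'⟩ hu
    obtain rfl : m' = m := by simpa using congrArg List.length htt
    obtain rfl := List.ofFn_injective htt
    obtain rfl := List.ofFn_injective hAA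
    exact ⟨B, ⟨hv, htv, hB⟩, hcon, hord⟩
  · rintro ⟨B, ⟨hv, htv, hB⟩, hcon, hord⟩
    exact ⟨m, t, A, B, hu.1, hv, hu.2.1, htv, hu.2.2, hB, hcon, hord⟩

theorem assemble_update_cons_perm (m : ℕ) (t : Fin m → ℕ) (A : Fin (m + 1) → Word)
    (j : Fin (m + 1)) (c : ℕ) :
    (assemble m t (Function.update A j (c :: A j))).Perm (c :: assemble m t A) := by
  induction m with
  | zero =>
    obtain rfl : j = 0 := Fin.fin_one_eq_zero j
    simp [assemble]
  | succ m ih =>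
    rw [assemble_succ, assemble_succ]
    induction j using Fin.cases with
    | zero => simp
    | succ k =>
      have hsucc : (fun i : Fin (m + 1) => Function.update A k.succ (c :: A k.succ) i.succ) =
          Function.update (fun i => A i.succ) k (c :: A k.succ) :=
        Function.update_comp_eq_of_injective A (Fin.succ_injective _) k _
      rw [Function.update_of_ne (Fin.succ_ne_zero k).symm, hsucc]
      refine (((ih _ _ k).cons _).append_left _).trans ?_
      simpa using List.perm_middle (l₁ := A 0 ++ [t 0])

theorem mem_update_cons_iff {m : ℕ} {A : Fin (m + 1) → Word} {j i : Fin (m + 1)} {c x : ℕ}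
    (hc : c ∈ A j) : x ∈ Function.update A j (c :: A j) i ↔ x ∈ A i := by
  rcases eq_or_ne i j with rfl | hij
  · rw [Function.update_self, List.mem_cons]
    exact ⟨fun h => h.elim (· ▸ hc) id, Or.inr⟩
  · rw [Function.update_of_ne hij]

theorem IsBlockDecomp.update_cons {u : Word} {m : ℕ} {t : Fin m → ℕ} {A : Fin (m + 1) → Word}
    {j : Fin (m + 1)} {c : ℕ} (h : IsBlockDecomp u m t A) (hc : c ∈ A j) :
    IsBlockDecomp (assemble m t (Function.update A j (c :: A j))) m t
      (Function.update A j (c :: A j)) := by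
  obtain ⟨rfl, ht, hA⟩ := h
  have hcount : ∀ y, (assemble m t (Function.update A j (c :: A j))).count y =
      (assemble m t A).count y + if c = y then 1 else 0 := fun y => by
    simp only [(assemble_update_cons_perm m t A j c).count_eq, List.count_cons, beq_iff_eq]
  refine ⟨rfl, fun i => ?_, fun i x hx => ?_⟩
  · have hc2 : 2 ≤ (assemble m t A).count c := hA j c hc
    have hne : c ≠ t i := fun h => by have := ht i; rw [← h] at this; omega
    rw [hcount, if_neg hne, ht]
  · have hx2 : 2 ≤ (assemble m t A).count x := hA i x ((mem_update_cons_iff hc).mp hx)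
    show 2 ≤ _
    rw [hcount]
    omega

theorem sameFirstOccOrder_of_forall_eq_or_eq {l l' : Word} {a b : ℕ}
    (hl : ∀ x ∈ l, x = a ∨ x = b)
    (hab : a ∈ l → b ∈ l → l.idxOf a < l.idxOf b ∧ l'.idxOf a < l'.idxOf b) :
    SameFirstOccOrder l l' := by
  intro x y hx hy hxy
  rcases hl x hx with rfl | rfl <;> rcases hl y hy with rfl | rfl
  · exact absurd rfl hxy
  · exact iff_of_true (hab hx hy).1 (hab hx hy).2
  · have := hab hy hx
    exact iff_of_false (by omega) (by omega)
  · exact absurd rfl hxy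

theorem idxOf_lt_idxOf_replicate_append {a b k : ℕ} (hab : a ≠ b) (hk : 1 ≤ k) (r : Word) :
    (List.replicate k a ++ b :: r).idxOf a < (List.replicate k a ++ b :: r).idxOf b := by
  obtain ⟨k, rfl⟩ := Nat.exists_eq_add_of_le' hk
  rw [List.replicate_succ, List.cons_append, List.idxOf_cons_self, List.idxOf_cons_ne _ hab]
  exact Nat.succ_pos _

theorem sameFirstOccOrder_or_update_cons {m : ℕ} {A B : Fin (m + 1) → Word} {j : Fin (m + 1)}
    {a b : ℕ} (hab : a ≠ b) (hletters : ∀ i, ∀ x ∈ A i, x = a ∨ x = b)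
    (hpair : ∀ i, a ∈ A i → b ∈ A i → i = j) (hbA : b ∈ A j)
    (hAab : (A j).idxOf a < (A j).idxOf b) (haB : a ∈ B j) (hbB : b ∈ B j) :
    (∀ i, SameFirstOccOrder (A i) (B i)) ∨
      ∀ i, SameFirstOccOrder (Function.update A j (b :: A j) i) (B i) := by
  rcases lt_or_gt_of_ne ((List.idxOf_inj haB).not.mpr hab) with hBab | hBba
  · refine .inl fun i => sameFirstOccOrder_of_forall_eq_or_eq (hletters i) fun ha hb => ?_
    obtain rfl := hpair i ha hb
    exact ⟨hAab, hBab⟩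
  · refine .inr fun i => sameFirstOccOrder_of_forall_eq_or_eq
      (fun x hx => (hletters i x ((mem_update_cons_iff hbA).mp hx)).symm) fun hb ha => ?_
    obtain rfl := hpair i ((mem_update_cons_iff hbA).mp ha) ((mem_update_cons_iff hbA).mp hb)
    rw [Function.update_self, List.idxOf_cons_self, List.idxOf_cons_ne _ hab.symm]
    exact ⟨Nat.succ_pos _, hBba⟩

theorem stmt0 (a b : ℕ) (hab : a ≠ b) (w w' : Word)
    (m : ℕ) (t : Fin m → ℕ) (A : Fin (m + 1) → Word) (j : Fin (m + 1))
    (hw : w = assemble m t A)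
    (ht : ∀ i : Fin m, w.count (t i) = 1)
    (hA : ∀ i : Fin (m + 1), ∀ x ∈ A i, x ∈ mulSet w)
    (hmul : mulSet w = {a, b})
    (hblock : ∃ (i : ℕ) (r : Word), 1 ≤ i ∧ (∀ x ∈ r, x = a ∨ x = b) ∧
      A j = List.replicate i a ++ b :: r)
    (honly : ∀ i : Fin (m + 1), i ≠ j → ¬(a ∈ A i ∧ b ∈ A i))
    (hw' : w' = assemble m t (Function.update A j (b :: A j))) :
    {x | simQ w x} = {x | beta w x} ∪ {x | beta w' x} := by
  obtain ⟨k, r, hk, -, hAj⟩ := hblock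
  have hAab : (A j).idxOf a < (A j).idxOf b := hAj ▸ idxOf_lt_idxOf_replicate_append hab hk r
  have haA : a ∈ A j := List.idxOf_lt_length_iff.mp (hAab.trans_le List.idxOf_le_length)
  have hbA : b ∈ A j := by simp [hAj]
  have hdec : IsBlockDecomp w m t A := ⟨hw, ht, hA⟩
  have hdec' : IsBlockDecomp w' m t (Function.update A j (b :: A j)) := by
    subst hw hw'; exact hdec.update_cons hbA
  have hletters : ∀ i, ∀ x ∈ A i, x = a ∨ x = b := fun i x hx => by
    simpa [hmul] using hA i x hx
  have hpair : ∀ i, a ∈ A i → b ∈ A i → i = j := fun i ha hb =>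
    by_contra fun hij => honly i hij ⟨ha, hb⟩
  ext v
  simp only [Set.mem_ofPred_eq, Set.mem_union, simQ, beta, betaAux_iff_of_isBlockDecomp hdec,
    betaAux_iff_of_isBlockDecomp hdec', mem_update_cons_iff hbA, Bool.false_eq_true,
    false_implies, and_true, forall_const]
  constructor
  · rintro ⟨B, hB, hcon⟩
    exact (sameFirstOccOrder_or_update_cons hab hletters hpair hbA hAab ((hcon j a).mp haA)
      ((hcon j b).mp hbA)).imp (fun h => ⟨B, hB, hcon, h⟩) (fun h => ⟨B, hB, hcon, h⟩)
  · rintro (⟨B, hB, hcon, -⟩ | ⟨B, hB, hcon, -⟩) <;> exact ⟨B, hB, hcon⟩
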